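/- Let (ℒ, ℒ̄) be a Toda Lax pair in the standard gauge and φ : ℤ → ℂ such that the constraint of type B, (T − T†)ℒ̄ = ℒ†(T − T†), holds. For k ≥ 1 set A_k = B_k − B̄_k. Then for every integer k ≥ 1 the following matrix identity holds: (T − T†)A_k + A_k†(T − T†) = Φ̄_k T − T Φ_k + Φ_k T† − T† Φ̄_k. -/

import Mathlib

/-- Pseudo-difference operators modeled as ℤ×ℤ matrices over ℂ. -/
abbrev PDO := ℤ → ℤ → ℂ

/-- Entrywise matrix product `(MN)(n,m) = Σ_k M(n,k) N(k,m)` (a `tsum`;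
it reduces to a finite sum whenever the supports make it finitely supported). -/
noncomputable def pmul (M N : PDO) : PDO := fun n m => ∑' k : ℤ, M n k * N k m

/-- The adjoint: `(M†)(n,m) = M(m,n)`. -/
def padj (M : PDO) : PDO := fun n m => M m n

/-- Matrix powers, with `ppow M 0` the identity matrix. -/
noncomputable def ppow (M : PDO) : ℕ → PDO
  | 0 => fun n m => if n = m then 1 else 0
  | k + 1 => pmul (ppow M k) M

/-- `(M)_{>0}`: the strictly upper-triangular (positive-diagonal) part. -/
def pplus (M : PDO) : PDO := fun n m => if n < m then M n m else 0

/-- `(M)_{<0}`: the strictly lower-triangular (negative-diagonal) part. -/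
def pminus (M : PDO) : PDO := fun n m => if m < n then M n m else 0

/-- `(M)_0`: the diagonal part. -/
def pzero (M : PDO) : PDO := fun n m => if n = m then M n m else 0

/-- `(M)_j`: the j-th diagonal part, with `(n, n+j)` entry `M(n, n+j)`. -/
def pdiag (j : ℤ) (M : PDO) : PDO := fun n m => if m = n + j then M n m else 0

/-- The shift matrix Λ: entries 1 iff `m = n+1`. -/
def shiftΛ : PDO := fun n m => if m = n + 1 then 1 else 0

/-- The inverse shift matrix Λ⁻¹ (transpose of Λ): entries 1 iff `m = n-1`. -/
def shiftΛinv : PDO := fun n m => if m = n - 1 then 1 else 0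

/-- Matrix `T` with entries `T(n,m) = e^{-φ(n)}` if `m = n+1`, else 0. -/
noncomputable def Tmat (φ : ℤ → ℂ) : PDO :=
  fun n m => if m = n + 1 then Complex.exp (-(φ n)) else 0

/-- A Toda Lax pair in the standard gauge: `L` is of lower type with
`L(n,m) = 0` for `m > n+1` and `L(n,n+1) = 1`; `L̄` is of upper type with
`L̄(n,m) = 0` for `m < n-1`. -/
def IsStandardPair (L Lb : PDO) : Prop :=
  (∀ n m : ℤ, n + 1 < m → L n m = 0) ∧ (∀ n : ℤ, L n (n + 1) = 1) ∧
  (∀ n m : ℤ, m < n - 1 → Lb n m = 0)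

/-- `B_k = (L^k)_{>0}`. -/
noncomputable def Bop (L : PDO) (k : ℕ) : PDO := pplus (ppow L k)

/-- `Φ_k = (L^k)_0`. -/
noncomputable def Phiop (L : PDO) (k : ℕ) : PDO := pzero (ppow L k)

/-- `B̄_k = (L̄^k)_{<0}`. -/
noncomputable def Bbarop (Lb : PDO) (k : ℕ) : PDO := pminus (ppow Lb k)

/-- `Φ̄_k = (L̄^k)_0`. -/
noncomputable def Phibarop (Lb : PDO) (k : ℕ) : PDO := pzero (ppow Lb k)

/-- `A_k = B_k - B̄_k`. -/
noncomputable def Aop (L Lb : PDO) (k : ℕ) : PDO := Bop L k - Bbarop Lb k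

/-! The constraint says that `S = T - T†` intertwines `L̄` with `L†`: `S L̄ = L† S`. All of `S`,
`L̄` and `L†` are of upper type, so products among them are finite sums and associative, and the
intertwining passes to powers: `S L̄^k = (L^k)† S`. For `m ≠ n`, entry `(n, m)` of the claimed
identity is then `±` an entry of this relation: `A_k` agrees with `(L^k)_{>0}` above the main
diagonal and with `-(L̄^k)_{<0}` below it, and on the first off-diagonals the diagonal parts
`Φ_k`, `Φ̄_k` that `A_k` lacks make up the difference. -/

def IsUpperType (N : ℤ) (M : PDO) : Prop := ∀ n m : ℤ, m < n - N → M n m = 0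

def pone : PDO := fun n m => if n = m then 1 else 0

lemma ppow_zero (M : PDO) : ppow M 0 = pone := rfl

lemma ppow_succ (M : PDO) (k : ℕ) : ppow M (k + 1) = pmul (ppow M k) M := rfl

lemma pmul_pone (M : PDO) : pmul M pone = M := by
  funext n m
  refine (tsum_eq_single m fun k hk => ?_).trans ?_ <;> simp [pone, *]

lemma pone_pmul (M : PDO) : pmul pone M = M := by
  funext n m
  refine (tsum_eq_single n fun k hk => ?_).trans ?_ <;> simp [pone, Ne.symm, *]

lemma padj_pone : padj pone = pone := by
  funext n m
  simp [padj, pone, eq_comm]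

lemma padj_pmul (A B : PDO) : padj (pmul A B) = pmul (padj B) (padj A) := by
  funext n m
  simp only [padj, pmul, mul_comm]

lemma isUpperType_pone : IsUpperType 0 pone := by
  intro n m h
  simp [pone, show n ≠ m by omega]

lemma isUpperType_padj_iff {N : ℤ} {M : PDO} :
    IsUpperType N (padj M) ↔ ∀ n m : ℤ, n + N < m → M n m = 0 :=
  ⟨fun h n m hnm => h m n (by omega), fun h n m hnm => h m n (by omega)⟩

namespace IsUpperType

variable {a b c : ℤ} {A B C : PDO}

lemma pmul_apply_eq_sum (hA : IsUpperType a A) (hB : IsUpperType b B) {n m lo hi : ℤ}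
    (hlo : lo ≤ n - a) (hhi : m + b ≤ hi) :
    pmul A B n m = ∑ k ∈ Finset.Icc lo hi, A n k * B k m := by
  refine tsum_eq_sum fun k hk => ?_
  rw [Finset.mem_Icc, not_and_or, not_le, not_le] at hk
  rcases hk with hk | hk
  · rw [hA n k (by omega), zero_mul]
  · rw [hB k m (by omega), mul_zero]

lemma mul (hA : IsUpperType a A) (hB : IsUpperType b B) : IsUpperType (a + b) (pmul A B) := by
  intro n m hnm
  rw [hA.pmul_apply_eq_sum hB le_rfl le_rfl, Finset.Icc_eq_empty (by omega), Finset.sum_empty]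

lemma pow (hA : IsUpperType a A) (k : ℕ) : IsUpperType (k * a) (ppow A k) := by
  induction k with
  | zero => simpa [ppow_zero] using isUpperType_pone
  | succ k ih =>
    rw [ppow_succ, show ((k + 1 : ℕ) : ℤ) * a = k * a + a by push_cast; ring]
    exact ih.mul hA

lemma pmul_assoc (hA : IsUpperType a A) (hB : IsUpperType b B) (hC : IsUpperType c C) :
    pmul (pmul A B) C = pmul A (pmul B C) := by
  funext n m
  rw [(hA.mul hB).pmul_apply_eq_sum hC (lo := n - a - b) (hi := m + c) (by omega) le_rfl,
    hA.pmul_apply_eq_sum (hB.mul hC) (lo := n - a) (hi := m + c + b) le_rfl (by omega)]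
  have inner_left : ∀ i ∈ Finset.Icc (n - a - b) (m + c),
      pmul A B n i = ∑ j ∈ Finset.Icc (n - a) (m + c + b), A n j * B j i := by
    intro i hi
    rw [Finset.mem_Icc] at hi
    exact hA.pmul_apply_eq_sum hB le_rfl (by omega)
  have inner_right : ∀ j ∈ Finset.Icc (n - a) (m + c + b),
      pmul B C j m = ∑ i ∈ Finset.Icc (n - a - b) (m + c), B j i * C i m := by
    intro j hj
    rw [Finset.mem_Icc] at hj
    exact hB.pmul_apply_eq_sum hC (by omega) le_rfl
  rw [Finset.sum_congr rfl fun i hi => congrArg (· * C i m) (inner_left i hi),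
    Finset.sum_congr rfl fun j hj => congrArg (A n j * ·) (inner_right j hj)]
  simp only [Finset.sum_mul, Finset.mul_sum, mul_assoc]
  exact Finset.sum_comm

lemma pmul_ppow (hA : IsUpperType a A) (k : ℕ) : pmul A (ppow A k) = ppow A (k + 1) := by
  induction k with
  | zero => rw [ppow_succ, ppow_zero, pmul_pone, pone_pmul]
  | succ k ih => rw [ppow_succ, ← pmul_assoc hA (hA.pow k) hA, ih, ppow_succ _ (k + 1)]

lemma padj_ppow (hA : IsUpperType a (padj A)) (k : ℕ) : padj (ppow A k) = ppow (padj A) k := by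
  induction k with
  | zero => exact padj_pone
  | succ k ih => rw [ppow_succ, padj_pmul, ih, hA.pmul_ppow]

lemma pmul_ppow_eq_of_pmul_eq {S X Y : PDO} {s x y : ℤ} (hS : IsUpperType s S)
    (hX : IsUpperType x X) (hY : IsUpperType y Y) (h : pmul S X = pmul Y S) (k : ℕ) :
    pmul S (ppow X k) = pmul (ppow Y k) S := by
  induction k with
  | zero => rw [ppow_zero, ppow_zero, pmul_pone, pone_pmul]
  | succ k ih =>
    rw [ppow_succ, ppow_succ, ← pmul_assoc hS (hX.pow k) hX, ih, pmul_assoc (hY.pow k) hS hX,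
      h, ← pmul_assoc (hY.pow k) hY hS]

end IsUpperType

section Tmat

variable (φ : ℤ → ℂ) (M : PDO) (n m : ℤ)

lemma hasSum_Tmat_mul :
    HasSum (fun k => Tmat φ n k * M k m) (Complex.exp (-φ n) * M (n + 1) m) := by
  convert hasSum_single (n + 1) fun k hk => ?_ using 1 <;> simp [Tmat, *]

lemma hasSum_mul_Tmat :
    HasSum (fun k => M n k * Tmat φ k m) (M n (m - 1) * Complex.exp (-φ (m - 1))) := by
  convert hasSum_single (m - 1) fun k hk => ?_ using 1
  · simp [Tmat]
  · simp [Tmat, show m ≠ k + 1 by omega]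

lemma hasSum_padj_Tmat_mul :
    HasSum (fun k => padj (Tmat φ) n k * M k m) (Complex.exp (-φ (n - 1)) * M (n - 1) m) := by
  convert hasSum_single (n - 1) fun k hk => ?_ using 1
  · simp [padj, Tmat]
  · simp [padj, Tmat, show n ≠ k + 1 by omega]

lemma hasSum_mul_padj_Tmat :
    HasSum (fun k => M n k * padj (Tmat φ) k m) (M n (m + 1) * Complex.exp (-φ m)) := by
  convert hasSum_single (m + 1) fun k hk => ?_ using 1 <;> simp [padj, Tmat, *]

lemma Tmat_pmul_apply : pmul (Tmat φ) M n m = Complex.exp (-φ n) * M (n + 1) m :=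
  (hasSum_Tmat_mul φ M n m).tsum_eq

lemma pmul_Tmat_apply : pmul M (Tmat φ) n m = M n (m - 1) * Complex.exp (-φ (m - 1)) :=
  (hasSum_mul_Tmat φ M n m).tsum_eq

lemma padj_Tmat_pmul_apply :
    pmul (padj (Tmat φ)) M n m = Complex.exp (-φ (n - 1)) * M (n - 1) m :=
  (hasSum_padj_Tmat_mul φ M n m).tsum_eq

lemma pmul_padj_Tmat_apply : pmul M (padj (Tmat φ)) n m = M n (m + 1) * Complex.exp (-φ m) :=
  (hasSum_mul_padj_Tmat φ M n m).tsum_eq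

lemma Tmat_sub_padj_pmul_apply :
    pmul (Tmat φ - padj (Tmat φ)) M n m
      = Complex.exp (-φ n) * M (n + 1) m - Complex.exp (-φ (n - 1)) * M (n - 1) m := by
  simpa only [pmul, Pi.sub_apply, sub_mul] using
    ((hasSum_Tmat_mul φ M n m).sub (hasSum_padj_Tmat_mul φ M n m)).tsum_eq

lemma pmul_Tmat_sub_padj_apply :
    pmul M (Tmat φ - padj (Tmat φ)) n m
      = M n (m - 1) * Complex.exp (-φ (m - 1)) - M n (m + 1) * Complex.exp (-φ m) := by
  simpa only [pmul, Pi.sub_apply, mul_sub] using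
    ((hasSum_mul_Tmat φ M n m).sub (hasSum_mul_padj_Tmat φ M n m)).tsum_eq

lemma isUpperType_Tmat_sub_padj : IsUpperType 1 (Tmat φ - padj (Tmat φ)) := by
  intro n m h
  simp [padj, Tmat, show m ≠ n + 1 by omega, show n ≠ m + 1 by omega]

end Tmat

theorem generator_antisymmetry_of_intertwining (φ : ℤ → ℂ) {P Q : PDO}
    (h : pmul (Tmat φ - padj (Tmat φ)) P = pmul (padj Q) (Tmat φ - padj (Tmat φ))) :
    pmul (Tmat φ - padj (Tmat φ)) (pplus Q - pminus P)
        + pmul (padj (pplus Q - pminus P)) (Tmat φ - padj (Tmat φ))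
      = pmul (pzero P) (Tmat φ) - pmul (Tmat φ) (pzero Q)
        + pmul (pzero Q) (padj (Tmat φ)) - pmul (padj (Tmat φ)) (pzero P) := by
  have he : ∀ a b : ℤ,
      Complex.exp (-φ a) * P (a + 1) b - Complex.exp (-φ (a - 1)) * P (a - 1) b
        = Q (b - 1) a * Complex.exp (-φ (b - 1)) - Q (b + 1) a * Complex.exp (-φ b) := by
    intro a b
    simpa only [Tmat_sub_padj_pmul_apply, pmul_Tmat_sub_padj_apply, padj] using
      congrFun (congrFun h a) b
  funext n m
  simp only [Pi.add_apply, Pi.sub_apply, Tmat_sub_padj_pmul_apply, pmul_Tmat_sub_padj_apply,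
    Tmat_pmul_apply, pmul_Tmat_apply, padj_Tmat_pmul_apply, pmul_padj_Tmat_apply, padj,
    pplus, pminus, pzero]
  obtain hmn | rfl | rfl | rfl | hmn :
      m + 1 < n ∨ n = m + 1 ∨ n = m ∨ m = n + 1 ∨ n + 1 < m := by omega
  · simp (disch := omega) only [if_pos, if_neg]
    linear_combination -he n m
  · simp (disch := omega) only [if_pos, if_neg, ↓reduceIte]
    linear_combination (norm := ring_nf) -he (m + 1) m
  · simp (disch := omega) only [if_pos, if_neg]
    ring
  · simp (disch := omega) only [if_pos, if_neg, ↓reduceIte]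
    linear_combination (norm := ring_nf) he (n + 1) n
  · simp (disch := omega) only [if_pos, if_neg]
    linear_combination he m n

/-- the anti-symmetry identity for the generators `A_k = B_k - B̄_k`
under the constraint of type B. -/
theorem typeB_generator_antisymmetry
    (L Lb : PDO) (φ : ℤ → ℂ)
    (hpair : IsStandardPair L Lb)
    (hconstr : pmul (Tmat φ - padj (Tmat φ)) Lb
      = pmul (padj L) (Tmat φ - padj (Tmat φ))) :
    ∀ k : ℕ, 1 ≤ k →
      pmul (Tmat φ - padj (Tmat φ)) (Aop L Lb k)
        + pmul (padj (Aop L Lb k)) (Tmat φ - padj (Tmat φ))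
      = pmul (Phibarop Lb k) (Tmat φ)
        - pmul (Tmat φ) (Phiop L k)
        + pmul (Phiop L k) (padj (Tmat φ))
        - pmul (padj (Tmat φ)) (Phibarop Lb k) := by
  obtain ⟨hL, -, hLb⟩ := hpair
  have hLadj : IsUpperType 1 (padj L) := isUpperType_padj_iff.mpr hL
  intro k _
  apply generator_antisymmetry_of_intertwining
  rw [hLadj.padj_ppow]
  exact (isUpperType_Tmat_sub_padj φ).pmul_ppow_eq_of_pmul_eq hLb hLadj hconstr k
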